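/- Let M ≥ 1 and let f : ℝ^M → ℝ be continuous and permutation invariant on [0,1]^M, i.e., f(x_{σ(1)}, …, x_{σ(M)}) = f(x_1, …, x_M) for every x ∈ [0,1]^M and every permutation σ of {1, …, M}. Then there exists a continuous function Φ : ℝ^{M+1} → ℝ such that f(x) = Φ(E(x)) for all x ∈ [0,1]^M, where E is the sum-of-power mapping. In other words, every continuous permutation-invariant function on [0,1]^M factors continuously through sum pooling of the power-sum features Ψ(t) = (1, t, t^2, …, t^M). -/

import Mathlib

/-!
By Newton's identities the power sums `p_1, …, p_M` of `M` numbers determine their elementary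
symmetric polynomials, hence the polynomial `∏ (X - x_m)` and, through its roots, the multiset of
the `x_m`. So a permutation invariant `f` is constant on the fibres of `E` over the cube. The cube
being compact, `E` is a quotient map onto its closed image, `f` descends to a continuous function
on that image, and Tietze's theorem extends it to all of `ℝ^{M+1}`.
-/

open Finset Polynomial

universe v w

theorem Multiset.eq_of_card_eq_of_esymm_eq {R : Type*} [CommRing R] [IsDomain R]
    {s t : Multiset R} (hcard : Multiset.card s = Multiset.card t)
    (hesymm : ∀ k ≤ Multiset.card s, s.esymm k = t.esymm k) : s = t := by
  have hprod : (s.map fun a => X - C a).prod = (t.map fun a => X - C a).prod := by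
    ext n
    by_cases hn : n ≤ Multiset.card s
    · rw [Multiset.prod_X_sub_C_coeff s hn, Multiset.prod_X_sub_C_coeff t (hcard ▸ hn),
        ← hcard, hesymm _ (Nat.sub_le _ _)]
    · rw [coeff_eq_zero_of_natDegree_lt, coeff_eq_zero_of_natDegree_lt] <;>
        simp only [natDegree_multiset_prod_X_sub_C_eq_card] <;> omega
  simpa only [roots_multiset_prod_X_sub_C] using congrArg roots hprod

namespace MvPolynomial

variable {σ R : Type*} [Fintype σ]

theorem aeval_psum [CommSemiring R] (x : σ → R) (k : ℕ) :
    aeval x (psum σ R k) = ∑ i, x i ^ k := by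
  simp [psum]

variable [CommRing R] [IsDomain R] [CharZero R]

theorem esymm_map_univ_eq_of_sum_pow_eq {x y : σ → R} {n : ℕ}
    (hpow : ∀ k ≤ n, ∑ i, x i ^ k = ∑ i, y i ^ k) :
    ∀ k ≤ n, (univ.val.map x).esymm k = (univ.val.map y).esymm k := by
  classical
  intro k
  induction k using Nat.strong_induction_on with
  | _ k ih =>
    intro hkn
    rcases Nat.eq_zero_or_pos k with rfl | hk
    · simp [Multiset.esymm]
    have newton (z : σ → R) := congrArg (aeval z) (mul_esymm_eq_sum σ R k)
    simp only [map_mul, map_natCast, map_sum, map_pow, map_neg, map_one,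
      aeval_esymm_eq_multiset_esymm, aeval_psum] at newton
    refine mul_left_cancel₀ (Nat.cast_ne_zero.mpr hk.ne') ?_
    rw [newton x, newton y]
    congr 1
    refine sum_congr rfl fun a ha => ?_
    simp only [mem_filter, HasAntidiagonal.mem_antidiagonal] at ha
    rw [ih a.1 ha.2 (by omega), hpow a.2 (by omega)]

theorem map_univ_eq_of_sum_pow_eq {x y : σ → R}
    (hpow : ∀ k ≤ Fintype.card σ, ∑ i, x i ^ k = ∑ i, y i ^ k) :
    univ.val.map x = univ.val.map y :=
  Multiset.eq_of_card_eq_of_esymm_eq (by simp) fun k hk =>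
    esymm_map_univ_eq_of_sum_pow_eq hpow k (by simpa using hk)

end MvPolynomial

theorem Fin.exists_perm_comp_eq_of_map_univ_eq {α : Type*} [LinearOrder α] {n : ℕ}
    {x y : Fin n → α} (h : univ.val.map x = univ.val.map y) :
    ∃ σ : Equiv.Perm (Fin n), x ∘ σ = y := by
  rw [Fin.univ_val_map, Fin.univ_val_map, Multiset.coe_eq_coe] at h
  have hperm : (List.ofFn (x ∘ Tuple.sort x)).Perm (List.ofFn (y ∘ Tuple.sort y)) :=
    ((Tuple.sort x).ofFn_comp_perm x).trans (h.trans ((Tuple.sort y).ofFn_comp_perm y).symm)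
  have hsorted : x ∘ Tuple.sort x = y ∘ Tuple.sort y :=
    List.ofFn_injective <| hperm.eq_of_sortedLE (Tuple.monotone_sort x).sortedLE_ofFn
      (Tuple.monotone_sort y).sortedLE_ofFn
  refine ⟨Tuple.sort x * (Tuple.sort y)⁻¹, funext fun i => ?_⟩
  simpa using congrFun hsorted ((Tuple.sort y)⁻¹ i)

theorem IsCompact.exists_continuous_eqOn_comp {X : Type*} {Y : Type v} {T : Type w}
    [TopologicalSpace X] [TopologicalSpace Y] [NormalSpace Y] [T2Space Y] [TopologicalSpace T]
    [TietzeExtension.{v, w} T]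
    {K : Set X} (hK : IsCompact K) {E : X → Y} (hE : Continuous E) {f : X → T}
    (hf : ContinuousOn f K) (hfE : ∀ x ∈ K, ∀ y ∈ K, E x = E y → f x = f y) :
    ∃ Φ : C(Y, T), Set.EqOn f (Φ ∘ E) K := by
  have : CompactSpace K := isCompact_iff_compactSpace.mp hK
  let e : C(K, E '' K) :=
    ⟨Set.imageFactorization E K, (hE.comp continuous_subtype_val).subtype_mk _⟩
  have hq : Topology.IsQuotientMap e :=
    .of_surjective_continuous Set.imageFactorization_surjective e.continuous
  let fK : C(K, T) := ⟨K.domRestrict f, hf.domRestrict⟩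
  have hfac : Function.FactorsThrough fK e :=
    fun x y hxy => hfE x x.2 y y.2 (congrArg Subtype.val hxy)
  let g : C(E '' K, T) := hq.lift fK hfac
  obtain ⟨Φ, hΦ⟩ := g.exists_restrict_eq (hK.image hE).isClosed
  refine ⟨Φ, fun x hx => ?_⟩
  calc f x = g (e ⟨x, hx⟩) := (DFunLike.congr_fun (hq.lift_comp fK hfac) ⟨x, hx⟩).symm
    _ = Φ (E x) := by rw [← hΦ]; rfl

theorem perm_invariant_factors_through_power_sums_general (M : ℕ)
    (f : (Fin M → ℝ) → ℝ) (hf : Continuous f)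
    (hinv : ∀ x : Fin M → ℝ, (∀ i, x i ∈ Set.Icc (0 : ℝ) 1) →
      ∀ σ : Equiv.Perm (Fin M), f (x ∘ σ) = f x) :
    ∃ Φ : (Fin (M + 1) → ℝ) → ℝ, Continuous Φ ∧
      ∀ x : Fin M → ℝ, (∀ i, x i ∈ Set.Icc (0 : ℝ) 1) →
        f x = Φ (fun q => ∑ m, x m ^ (q : ℕ)) := by
  let cube : Set (Fin M → ℝ) := Set.univ.pi fun _ => Set.Icc 0 1
  let E : (Fin M → ℝ) → Fin (M + 1) → ℝ := fun x q => ∑ m, x m ^ (q : ℕ)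
  have hfE : ∀ x ∈ cube, ∀ y ∈ cube, E x = E y → f x = f y := by
    intro x hx y _ hxy
    have hpow (k : ℕ) (hk : k ≤ Fintype.card (Fin M)) : ∑ i, x i ^ k = ∑ i, y i ^ k :=
      congrFun hxy ⟨k, Nat.lt_succ_of_le (hk.trans_eq (Fintype.card_fin M))⟩
    obtain ⟨σ, rfl⟩ :=
      Fin.exists_perm_comp_eq_of_map_univ_eq (MvPolynomial.map_univ_eq_of_sum_pow_eq hpow)
    exact (hinv x (Set.mem_univ_pi.mp hx) σ).symm
  obtain ⟨Φ, hΦ⟩ := (isCompact_univ_pi fun _ => isCompact_Icc).exists_continuous_eqOn_comp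
    (by fun_prop) hf.continuousOn hfE
  exact ⟨Φ, Φ.continuous, fun x hx => hΦ (Set.mem_univ_pi.mpr hx)⟩

/-- Every continuous function `f : ℝ^M → ℝ` (`M ≥ 1`) that is
permutation invariant on `[0,1]^M` factors continuously through the
sum-of-power mapping `E : ℝ^M → ℝ^{M+1}`, `E_q(x) = ∑_m (x_m)^q` for
`q = 0, …, M`: there is a continuous `Φ : ℝ^{M+1} → ℝ` with `f(x) = Φ(E(x))`
for all `x ∈ [0,1]^M`. -/
theorem perm_invariant_factors_through_power_sums (M : ℕ) (hM : 1 ≤ M)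
    (f : (Fin M → ℝ) → ℝ) (hf : Continuous f)
    (hinv : ∀ x : Fin M → ℝ, (∀ i, x i ∈ Set.Icc (0 : ℝ) 1) →
      ∀ σ : Equiv.Perm (Fin M), f (x ∘ σ) = f x) :
    ∃ Φ : (Fin (M + 1) → ℝ) → ℝ, Continuous Φ ∧
      ∀ x : Fin M → ℝ, (∀ i, x i ∈ Set.Icc (0 : ℝ) 1) →
        f x = Φ (fun q => ∑ m, x m ^ (q : ℕ)) :=
  perm_invariant_factors_through_power_sums_general M f hf hinv
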